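/- Let V be a finite index set and for each i ∈ V let Z_i be a finite set. Let f be a real-valued function of z = (z_i)_{i∈V} ∈ ∏_{i∈V} Z_i, and for each i ∈ V let P_i and P̃_i be probability distributions on Z_i. Let P = ∏_{i∈V} P_i and P̃ = ∏_{i∈V} P̃_i be the corresponding product distributions. Then |E_{z∼P} f(z) − E_{z∼P̃} f(z)| ≤ Σ_{i∈V} TV(P_i, P̃_i) · δ_i(f), where δ_i(f) = sup over z_{V∖{i}} of sup over z_i, z_i' of |f(z_i, z_{V∖{i}}) − f(z_i', z_{V∖{i}})|. -/
import Mathlib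


open Finset

/-- Total variation distance `TV(p,q) = (1/2) ∑ₓ |p x − q x|` between two
finitely supported distributions. -/
noncomputable def TV {X : Type*} [Fintype X] (p q : X → ℝ) : ℝ :=
  (1 / 2) * ∑ x, |p x - q x|

/-- `osc Z f i` is `δ_i(f)`, the oscillation of `f` in its `i`-th coordinate:
the sup over `z_{V∖{i}}` and over `z_i, z_i'` of
`|f(z_i, z_{V∖{i}}) − f(z_i', z_{V∖{i}})|`. -/
noncomputable def osc {V : Type*} [Fintype V] [DecidableEq V]
    (Z : V → Type*) [∀ i, Fintype (Z i)] [∀ i, Nonempty (Z i)]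
    (f : (∀ i, Z i) → ℝ) (i : V) : ℝ :=
  Finset.univ.sup' Finset.univ_nonempty
    (fun p : (∀ j, Z j) × Z i × Z i =>
      |f (Function.update p.1 i p.2.1) - f (Function.update p.1 i p.2.2)|)

/-- inner bound: for `g x = f (update z i x)` and `d` summing to 0,
`|∑ x, d x * g x| ≤ (1/2 ∑ |d x|) * osc`. -/
lemma inner_bound {V : Type*} [Fintype V] [DecidableEq V]
    (Z : V → Type*) [∀ i, Fintype (Z i)] [∀ i, Nonempty (Z i)]
    (f : (∀ i, Z i) → ℝ) (i : V) (z : ∀ j, Z j)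
    (d : Z i → ℝ) (hd : ∑ x, d x = 0) :
    |∑ x, d x * f (Function.update z i x)| ≤
      ((1/2) * ∑ x, |d x|) * osc Z f i := by
  set g : Z i → ℝ := fun x => f (Function.update z i x) with hg
  have hne : (Finset.univ : Finset (Z i)).Nonempty := univ_nonempty
  set M : ℝ := univ.sup' hne g
  set m : ℝ := univ.inf' hne g
  have hMm : M - m ≤ osc Z f i := by
    obtain ⟨a, -, ha⟩ := Finset.exists_mem_eq_sup' hne g
    obtain ⟨b, -, hb⟩ := Finset.exists_mem_eq_inf' hne g
    have h1 : |f (Function.update z i a) - f (Function.update z i b)| ≤ osc Z f i := by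
      exact Finset.le_sup' (f := fun p : (∀ j, Z j) × Z i × Z i =>
        |f (Function.update p.1 i p.2.1) - f (Function.update p.1 i p.2.2)|)
        (mem_univ (z, a, b))
    calc M - m = g a - g b := by rw [show M = g a from ha, show m = g b from hb]
      _ ≤ |g a - g b| := le_abs_self _
      _ ≤ osc Z f i := h1
  have key : ∑ x, d x * g x = ∑ x, d x * (g x - (M + m) / 2) := by
    rw [eq_comm]
    simp only [mul_sub]
    rw [Finset.sum_sub_distrib, ← Finset.sum_mul, hd, zero_mul, sub_zero]
  have hbound : ∀ x : Z i, |g x - (M + m) / 2| ≤ (M - m) / 2 := by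
    intro x
    have h1 : m ≤ g x := Finset.inf'_le _ (mem_univ x)
    have h2 : g x ≤ M := Finset.le_sup' _ (mem_univ x)
    rw [abs_le]; constructor <;> linarith
  calc |∑ x, d x * g x| = |∑ x, d x * (g x - (M + m) / 2)| := by rw [key]
    _ ≤ ∑ x, |d x * (g x - (M + m) / 2)| := Finset.abs_sum_le_sum_abs _ _
    _ ≤ ∑ x, |d x| * ((M - m) / 2) := by
        refine Finset.sum_le_sum fun x _ => ?_
        rw [abs_mul]
        exact mul_le_mul_of_nonneg_left (hbound x) (abs_nonneg _)
    _ = ((1/2) * ∑ x, |d x|) * (M - m) := by rw [← Finset.sum_mul]; ring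
    _ ≤ ((1/2) * ∑ x, |d x|) * osc Z f i := by
        refine mul_le_mul_of_nonneg_left hMm ?_
        positivity

lemma step_lemma {V : Type*} [Fintype V] [DecidableEq V]
    (Z : V → Type*) [∀ i, Fintype (Z i)] [∀ i, Nonempty (Z i)]
    (f : (∀ i, Z i) → ℝ) (i : V)
    (Q Q' : ∀ j, Z j → ℝ)
    (hQ : ∀ j x, 0 ≤ Q j x) (hQ1 : ∀ j, ∑ x, Q j x = 1)
    (hQ'1 : ∑ x, Q' i x = 1)
    (hagree : ∀ j, j ≠ i → Q j = Q' j) :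
    |(∑ z, (∏ j, Q j (z j)) * f z) - ∑ z, (∏ j, Q' j (z j)) * f z| ≤
      TV (Q i) (Q' i) * osc Z f i := by
  classical
  set W : (∀ j, Z j) → ℝ := fun z => ∏ j ∈ univ.erase i, Q j (z j) with hW
  have hW0 : ∀ z, 0 ≤ W z := fun z => Finset.prod_nonneg fun j _ => hQ j _
  have hWupd : ∀ z x, W (Function.update z i x) = W z := by
    intro z x
    refine Finset.prod_congr rfl fun j hj => ?_
    rw [Function.update_of_ne (Finset.ne_of_mem_erase hj)]
  set d : Z i → ℝ := fun x => Q i x - Q' i x with hdd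
  have hd : ∑ x, d x = 0 := by
    simp only [hdd, Finset.sum_sub_distrib, hQ1 i, hQ'1, sub_self]
  set N : ℝ := (Fintype.card (Z i) : ℝ) with hN
  have hNpos : 0 < N := by
    simp only [hN]; exact_mod_cast Fintype.card_pos
  have hdiff : (∑ z, (∏ j, Q j (z j)) * f z) - ∑ z, (∏ j, Q' j (z j)) * f z
      = ∑ z, W z * d (z i) * f z := by
    rw [← Finset.sum_sub_distrib]
    refine Finset.sum_congr rfl fun z _ => ?_
    have h1 : ∏ j, Q j (z j) = Q i (z i) * W z :=
      (Finset.mul_prod_erase univ _ (mem_univ i)).symm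
    have h2 : ∏ j, Q' j (z j) = Q' i (z i) * W z := by
      rw [← Finset.mul_prod_erase univ (fun j => Q' j (z j)) (mem_univ i)]
      congr 1
      exact Finset.prod_congr rfl fun j hj => by
        rw [(hagree j (Finset.ne_of_mem_erase hj))]
    rw [h1, h2, hdd]; ring
  -- key resummation via the involution (z, x) ↦ (update z i x, z i)
  have key : ∑ z, W z * d (z i) * f z
      = ∑ z, (N⁻¹ * W z) * ∑ x, d x * f (Function.update z i x) := by
    have huniform : ∑ _x : Z i, (N⁻¹ : ℝ) = 1 := by
      rw [Finset.sum_const, card_univ, nsmul_eq_mul, hN, mul_inv_cancel₀ hNpos.ne']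
    have lhs_eq : ∑ z, W z * d (z i) * f z
        = ∑ p : (∀ j, Z j) × Z i, N⁻¹ * W p.1 * d (p.1 i) * f p.1 := by
      rw [Fintype.sum_prod_type]
      refine Finset.sum_congr rfl fun z _ => ?_
      have h : ∑ x : Z i, N⁻¹ * W z * d (z i) * f z
          = (∑ _x : Z i, (N⁻¹ : ℝ)) * (W z * d (z i) * f z) := by
        rw [Finset.sum_mul]
        exact Finset.sum_congr rfl fun x _ => by ring
      rw [h, huniform, one_mul]
    have rhs_eq : ∑ z, (N⁻¹ * W z) * ∑ x, d x * f (Function.update z i x)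
        = ∑ p : (∀ j, Z j) × Z i,
            N⁻¹ * W p.1 * d p.2 * f (Function.update p.1 i p.2) := by
      rw [Fintype.sum_prod_type]
      refine Finset.sum_congr rfl fun z _ => ?_
      rw [Finset.mul_sum]
      exact Finset.sum_congr rfl fun x _ => by ring
    rw [lhs_eq, rhs_eq]
    set σ : (∀ j, Z j) × Z i → (∀ j, Z j) × Z i :=
      fun p => (Function.update p.1 i p.2, p.1 i) with hσ
    have hinv : Function.Involutive σ := by
      intro p
      simp only [hσ, Function.update_idem, Function.update_self,
        Function.update_eq_self]
    refine Fintype.sum_bijective σ hinv.bijective _ _ fun p => ?_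
    simp only [hσ, hWupd, Function.update_self, Function.update_idem,
      Function.update_eq_self]
  rw [hdiff, key]
  have hsum1 : ∑ z, N⁻¹ * W z = 1 := by
    set R : ∀ j, Z j → ℝ := Function.update Q i (fun _ => N⁻¹) with hR
    have hRz : ∀ z : ∀ j, Z j, N⁻¹ * W z = ∏ j, R j (z j) := by
      intro z
      rw [← Finset.mul_prod_erase univ (fun j => R j (z j)) (mem_univ i)]
      simp only [hR, Function.update_self]
      congr 1
      exact Finset.prod_congr rfl fun j hj => by
        rw [Function.update_of_ne (Finset.ne_of_mem_erase hj)]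
    calc ∑ z, N⁻¹ * W z = ∑ z, ∏ j, R j (z j) := Finset.sum_congr rfl fun z _ => hRz z
      _ = ∏ j, ∑ x, R j x := by
          rw [Finset.prod_univ_sum]
          rw [Fintype.piFinset_univ]
      _ = 1 := by
          refine Finset.prod_eq_one fun j _ => ?_
          by_cases h : j = i
          · subst h
            simp only [hR, Function.update_self]
            rw [Finset.sum_const, card_univ, nsmul_eq_mul, hN, mul_inv_cancel₀ hNpos.ne']
          · simp only [hR, Function.update_of_ne h]
            exact hQ1 j
  calc |∑ z, (N⁻¹ * W z) * ∑ x, d x * f (Function.update z i x)|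
      ≤ ∑ z, |(N⁻¹ * W z) * ∑ x, d x * f (Function.update z i x)| :=
        Finset.abs_sum_le_sum_abs _ _
    _ ≤ ∑ z, (N⁻¹ * W z) * (TV (Q i) (Q' i) * osc Z f i) := by
        refine Finset.sum_le_sum fun z _ => ?_
        have h0 : 0 ≤ N⁻¹ * W z := mul_nonneg (by positivity) (hW0 z)
        rw [abs_mul, abs_of_nonneg h0]
        refine mul_le_mul_of_nonneg_left ?_ h0
        have := inner_bound Z f i z d hd
        simpa [TV, hdd] using this
    _ = TV (Q i) (Q' i) * osc Z f i := by
        rw [← Finset.sum_mul, hsum1, one_mul]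

/-- **Lemma 5.** For product distributions `P = ∏ᵢ Pᵢ` and `P̃ = ∏ᵢ P̃ᵢ` on a finite
product space, `|E_P f − E_P̃ f| ≤ ∑ᵢ TV(Pᵢ, P̃ᵢ) δᵢ(f)`. -/
theorem product_distribution_difference
    {V : Type*} [Fintype V] [DecidableEq V]
    (Z : V → Type*) [∀ i, Fintype (Z i)] [∀ i, Nonempty (Z i)]
    (f : (∀ i, Z i) → ℝ)
    (P Pt : ∀ i, Z i → ℝ)
    (hP : ∀ i x, 0 ≤ P i x) (hP1 : ∀ i, ∑ x, P i x = 1)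
    (hPt : ∀ i x, 0 ≤ Pt i x) (hPt1 : ∀ i, ∑ x, Pt i x = 1) :
    |(∑ z, (∏ i, P i (z i)) * f z) - ∑ z, (∏ i, Pt i (z i)) * f z| ≤
      ∑ i, TV (P i) (Pt i) * osc Z f i := by
  classical
  set M : Finset V → ∀ j, Z j → ℝ := fun s j => if j ∈ s then P j else Pt j with hM
  have hM0 : ∀ s j x, 0 ≤ M s j x := by
    intro s j x; simp only [hM]; split <;> [exact hP j x; exact hPt j x]
  have hM1 : ∀ s j, ∑ x, M s j x = 1 := by
    intro s j; simp only [hM]; split <;> [exact hP1 j; exact hPt1 j]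
  have main : ∀ s : Finset V,
      |(∑ z, (∏ j, M s j (z j)) * f z) - ∑ z, (∏ j, Pt j (z j)) * f z| ≤
        ∑ i ∈ s, TV (P i) (Pt i) * osc Z f i := by
    intro s
    induction s using Finset.induction_on with
    | empty =>
        simp only [hM, Finset.notMem_empty, if_false, sub_self, abs_zero,
          Finset.sum_empty, le_refl]
    | @insert i s hi ih =>
        have agree : ∀ j, j ≠ i → M (insert i s) j = M s j := by
          intro j hj
          simp only [hM, Finset.mem_insert]
          congr 1
          simp [hj]
        have hstep := step_lemma Z f i (M (insert i s)) (M s)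
          (hM0 _) (hM1 _) (hM1 _ i) agree
        calc |(∑ z, (∏ j, M (insert i s) j (z j)) * f z) - ∑ z, (∏ j, Pt j (z j)) * f z|
            ≤ |(∑ z, (∏ j, M (insert i s) j (z j)) * f z) - ∑ z, (∏ j, M s j (z j)) * f z|
              + |(∑ z, (∏ j, M s j (z j)) * f z) - ∑ z, (∏ j, Pt j (z j)) * f z| :=
              abs_sub_le _ _ _
          _ ≤ TV (M (insert i s) i) (M s i) * osc Z f i
              + ∑ j ∈ s, TV (P j) (Pt j) * osc Z f j := add_le_add hstep ih
          _ = ∑ j ∈ insert i s, TV (P j) (Pt j) * osc Z f j := by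
              have h1 : M (insert i s) i = P i := by simp [hM]
              have h2 : M s i = Pt i := by simp [hM, hi]
              rw [Finset.sum_insert hi, h1, h2]
  have := main univ
  have hMuniv : ∀ j, M univ j = P j := by intro j; simp [hM]
  calc |(∑ z, (∏ i, P i (z i)) * f z) - ∑ z, (∏ i, Pt i (z i)) * f z|
      = |(∑ z, (∏ j, M univ j (z j)) * f z) - ∑ z, (∏ j, Pt j (z j)) * f z| := by
        simp [hMuniv]
    _ ≤ ∑ i, TV (P i) (Pt i) * osc Z f i := this
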